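/- Let n ≥ 1 and let S be a left-handed skew Boolean algebra freely generated by a set of n distinct elements. Then the set of atoms of S has exactly n·2^{n−1} elements. -/

import Mathlib

universe u

/-- A skew Boolean algebra. -/
class SBA (S : Type u) where
  wedge : S → S → S
  vee : S → S → S
  diff : S → S → S
  zero : S
  wedge_assoc : ∀ x y z : S, wedge (wedge x y) z = wedge x (wedge y z)
  vee_assoc : ∀ x y z : S, vee (vee x y) z = vee x (vee y z)
  absorb1 : ∀ x y : S, wedge x (vee x y) = x
  absorb2 : ∀ x y : S, wedge (vee y x) x = x
  absorb3 : ∀ x y : S, vee x (wedge x y) = x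
  absorb4 : ∀ x y : S, vee (wedge y x) x = x
  sdistrib1 : ∀ x y z : S, wedge x (vee y z) = vee (wedge x y) (wedge x z)
  sdistrib2 : ∀ x y z : S, wedge (vee x y) z = vee (wedge x z) (wedge y z)
  zero_wedge : ∀ x : S, wedge zero x = zero
  wedge_zero : ∀ x : S, wedge x zero = zero
  zero_vee : ∀ x : S, vee zero x = x
  vee_zero : ∀ x : S, vee x zero = x
  diff_ax1 : ∀ x y : S, vee (wedge (wedge x y) x) (diff x y) = x
  diff_ax2 : ∀ x y : S, wedge (wedge (wedge x y) x) (diff x y) = zero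
  diff_ax3 : ∀ x y : S, wedge (diff x y) (wedge (wedge x y) x) = zero

namespace SBA

scoped infixl:70 " ⋏ " => SBA.wedge
scoped infixl:65 " ⋎ " => SBA.vee
scoped infixl:70 " ∖ " => SBA.diff

variable {S : Type u} [SBA S]

/-- Green's relation `D`: `x D y` iff `x⋏y⋏x = x` and `y⋏x⋏y = y`. -/
def Drel (x y : S) : Prop := x ⋏ y ⋏ x = x ∧ y ⋏ x ⋏ y = y

/-- The natural partial order: `x ≤ y` iff `x⋏y = x = y⋏x`. -/
def nle (x y : S) : Prop := x ⋏ y = x ∧ y ⋏ x = x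

/-- An atom: a nonzero element with nothing strictly between it and `0`. -/
def IsAtom (a : S) : Prop := a ≠ zero ∧ ∀ x : S, nle x a → x = zero ∨ x = a

/-- `X` generates `S`: the only subset of `S` containing `X` and `0` and closed
under the three operations is `S` itself. -/
def Generates (X : Set S) : Prop :=
  ∀ T : Set S, X ⊆ T → zero ∈ T →
    (∀ a b : S, a ∈ T → b ∈ T → a ⋏ b ∈ T ∧ a ⋎ b ∈ T ∧ a ∖ b ∈ T) →
    T = Set.univ

/-- A homomorphism of skew Boolean algebras. -/
def IsHom {T : Type u} [SBA T] (f : S → T) : Prop :=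
  (∀ a b : S, f (a ⋏ b) = f a ⋏ f b) ∧ (∀ a b : S, f (a ⋎ b) = f a ⋎ f b) ∧
    (∀ a b : S, f (a ∖ b) = f a ∖ f b) ∧ f zero = zero

end SBA

open SBA

/-- A left-handed skew Boolean algebra. -/
class LeftHanded (S : Type u) [SBA S] : Prop where
  lh_wedge : ∀ x y : S, x ⋏ y ⋏ x = x ⋏ y
  lh_vee : ∀ x y : S, x ⋎ y ⋎ x = y ⋎ x

/-- `S` is freely generated by `X` over the variety of all skew Boolean algebras. -/
def FreelyGenerates (S : Type u) [SBA S] (X : Set S) : Prop :=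
  Generates X ∧
    ∀ (T : Type u) [SBA T], ∀ g : X → T,
      ∃ f : S → T, IsHom f ∧ ∀ x : X, f x = g x

/-- `S` is freely generated by `X` over the variety of left-handed skew Boolean algebras. -/
def LFreelyGenerates (S : Type u) [SBA S] [LeftHanded S] (X : Set S) : Prop :=
  Generates X ∧
    ∀ (T : Type u) [SBA T] [LeftHanded T], ∀ g : X → T,
      ∃ f : S → T, IsHom f ∧ ∀ x : X, f x = g x

/-!
Realise the free algebra concretely: take the product, over all subsets `A ⊆ {1, …, n}`, of the
left-handed algebras `A ∪ {0}`, with generator `i` having component `i` at every `A ∋ i` and `0`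
elsewhere. Its atoms are the elements with exactly one nonzero component, so there are
`∑_A |A| = n 2ⁿ⁻¹` of them.

Freeness gives a homomorphism `f` from `S` to the model sending `xᵢ` to generator `i`; it remains
to invert it. In `S` let `e_{A,i}` (`i ∈ A`) be `xᵢ` met with every `x_k`, `k ∈ A`, and with every
`x_l`, `l ∉ A`, removed. Because `⋏` is a left normal band, `e_{A,i} ⋏ e_{B,j} = 0` for `A ≠ B`
while `e_{A,i} ⋏ e_{A,j} = e_{A,i}`, and splitting along one generator at a time gives
`xᵢ = ⋁_{A ∋ i} e_{A,i}`. Hence sending an element of the model to the orthogonal join of the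
`e_{A,i}` selected by its components is a homomorphism fixing the generators, and it inverts `f`:
on one side by generation, on the other by computing in the model.
-/

universe v w

namespace SBA

section Basic

variable {S : Type u} [SBA S]

theorem wedge_self (a : S) : a ⋏ a = a := by
  simpa only [absorb3] using absorb1 a (a ⋏ a)

theorem zero_nle (a : S) : nle zero a := ⟨zero_wedge a, wedge_zero a⟩

theorem nle_refl (a : S) : nle a a := ⟨wedge_self a, wedge_self a⟩

theorem nle_trans {a b c : S} (hab : nle a b) (hbc : nle b c) : nle a c :=
  ⟨by rw [← hab.1, wedge_assoc, hbc.1], by rw [← hab.2, ← wedge_assoc, hbc.2]⟩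

/-- The hypotheses say that `m` and `m'` are related by Green's relation `L`. -/
theorem wedge_eq_wedge_of_L {m m' : S} (h : m ⋏ m' = m) (h' : m' ⋏ m = m') (a : S) :
    a ⋏ m = a ⋏ m' := by
  have hvee : m' ⋎ m = m := by simpa only [h'] using absorb4 m m'
  calc a ⋏ m = a ⋏ m' ⋎ a ⋏ m := by rw [← sdistrib1, hvee]
    _ = a ⋏ ((a ⋎ m) ⋏ m') := by
      rw [sdistrib2, h, sdistrib1, ← wedge_assoc, wedge_self]
    _ = a ⋏ m' := by rw [← wedge_assoc, absorb1]

theorem vee_eq_left_of_nle {a b : S} (h : nle b a) : a ⋎ b = a := by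
  simpa only [h.2] using absorb3 a b

theorem wedge_eq_zero_of_nle {a b c d : S} (hc : nle c a) (hd : nle d b) (h : a ⋏ b = zero) :
    c ⋏ d = zero := by
  rw [← hc.1, ← hd.2, wedge_assoc, ← wedge_assoc a, h, zero_wedge, wedge_zero]

end Basic

section LeftHanded

variable {S : Type u} [SBA S] [LeftHanded S]

theorem wedge_right_comm (a b c : S) : a ⋏ b ⋏ c = a ⋏ c ⋏ b := by
  have hbc : (b ⋏ c) ⋏ (c ⋏ b) = b ⋏ c := by
    rw [← wedge_assoc, wedge_assoc b c c, wedge_self, LeftHanded.lh_wedge]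
  have hcb : (c ⋏ b) ⋏ (b ⋏ c) = c ⋏ b := by
    rw [← wedge_assoc, wedge_assoc c b b, wedge_self, LeftHanded.lh_wedge]
  rw [wedge_assoc, wedge_assoc, wedge_eq_wedge_of_L hbc hcb]

theorem wedge_eq_zero_comm {a b : S} (h : a ⋏ b = zero) : b ⋏ a = zero := by
  rw [← LeftHanded.lh_wedge, wedge_assoc, h, wedge_zero]

theorem nle.wedge_comm {a b c : S} (ha : nle a c) (hb : nle b c) : a ⋏ b = b ⋏ a :=
  calc a ⋏ b = c ⋏ a ⋏ b := by rw [ha.2]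
    _ = c ⋏ b ⋏ a := wedge_right_comm c a b
    _ = b ⋏ a := by rw [hb.2]

theorem vee_comm_of_wedge_eq_zero {a b : S} (h : a ⋏ b = zero) : a ⋎ b = b ⋎ a := by
  have hba : (a ⋎ b) ⋏ a = a := by
    rw [sdistrib2, wedge_self, wedge_eq_zero_comm h, vee_zero]
  calc a ⋎ b = a ⋎ b ⋎ (a ⋎ b) ⋏ a := (absorb3 _ _).symm
    _ = b ⋎ a := by rw [hba, LeftHanded.lh_vee]

theorem wedge_vee_diff (a b : S) : a ⋏ b ⋎ a ∖ b = a := by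
  simpa only [LeftHanded.lh_wedge] using diff_ax1 a b

theorem wedge_wedge_diff (a b : S) : a ⋏ b ⋏ (a ∖ b) = zero := by
  simpa only [LeftHanded.lh_wedge] using diff_ax2 a b

theorem diff_wedge_wedge (a b : S) : a ∖ b ⋏ (a ⋏ b) = zero := by
  simpa only [LeftHanded.lh_wedge] using diff_ax3 a b

theorem diff_nle (a b : S) : nle (a ∖ b) a := by
  constructor
  · calc a ∖ b ⋏ a = a ∖ b ⋏ (a ⋏ b ⋎ a ∖ b) := by rw [wedge_vee_diff]
      _ = a ∖ b := by rw [sdistrib1, diff_wedge_wedge, wedge_self, zero_vee]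
  · calc a ⋏ (a ∖ b) = (a ⋏ b ⋎ a ∖ b) ⋏ (a ∖ b) := by rw [wedge_vee_diff]
      _ = a ∖ b := by rw [sdistrib2, wedge_wedge_diff, wedge_self, zero_vee]

theorem diff_wedge_self (a b : S) : a ∖ b ⋏ b = zero := by
  rw [← (diff_nle a b).1, wedge_assoc, diff_wedge_wedge]

/-- `a ∖ b` is the unique complement of `a ⋏ b` below `a`. -/
theorem eq_diff_of {a b c : S} (hc : nle c a) (h₁ : c ⋏ (a ⋏ b) = zero)
    (h₂ : a ⋏ b ⋎ c = a) : c = a ∖ b := by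
  have hc' : c = c ⋏ (a ∖ b) :=
    calc c = c ⋏ (a ⋏ b ⋎ a ∖ b) := by rw [wedge_vee_diff, hc.1]
      _ = c ⋏ (a ∖ b) := by rw [sdistrib1, h₁, zero_vee]
  have hd : a ∖ b = a ∖ b ⋏ c :=
    calc a ∖ b = a ∖ b ⋏ (a ⋏ b ⋎ c) := by rw [h₂, (diff_nle a b).1]
      _ = a ∖ b ⋏ c := by rw [sdistrib1, diff_wedge_wedge, zero_vee]
  rw [hc', nle.wedge_comm hc (diff_nle a b), ← hd]

theorem wedge_nle_left (a b : S) : nle (a ⋏ b) a :=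
  ⟨LeftHanded.lh_wedge a b, by rw [← wedge_assoc, wedge_self]⟩

theorem diff_eq_self_of_wedge_eq_zero {a b : S} (h : a ⋏ b = zero) : a ∖ b = a :=
  (eq_diff_of (nle_refl a) (by rw [← wedge_assoc, wedge_self, h]) (by rw [h, zero_vee])).symm

theorem diff_zero (a : S) : a ∖ zero = a :=
  diff_eq_self_of_wedge_eq_zero (wedge_zero a)

theorem diff_eq_zero_of_wedge_eq {a b : S} (h : a ⋏ b = a) : a ∖ b = zero :=
  (eq_diff_of (zero_nle a) (zero_wedge _) (by rw [h, vee_zero])).symm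

theorem zero_diff (a : S) : zero ∖ a = zero :=
  diff_eq_zero_of_wedge_eq (zero_wedge a)

theorem nle_diff {c a b : S} (hc : nle c a) (h : c ⋏ b = zero) : nle c (a ∖ b) := by
  have hc' : c ⋏ (a ∖ b) = c :=
    calc c ⋏ (a ∖ b) = c ⋏ (a ⋏ b) ⋎ c ⋏ (a ∖ b) := by
          rw [← wedge_assoc, hc.1, h, zero_vee]
      _ = c := by rw [← sdistrib1, wedge_vee_diff, hc.1]
  exact ⟨hc', by rw [← nle.wedge_comm hc (diff_nle a b), hc']⟩

theorem diff_wedge_comm (a b c : S) : a ∖ b ⋏ c = (a ⋏ c) ∖ b := by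
  have hd := diff_nle a b
  have hle : nle (a ∖ b ⋏ c) (a ⋏ c) :=
    ⟨by rw [← wedge_assoc, wedge_right_comm (a ∖ b) c a, hd.1, wedge_assoc, wedge_self],
      by rw [← wedge_assoc, wedge_right_comm a c (a ∖ b), hd.2, wedge_assoc, wedge_self]⟩
  apply eq_diff_of hle
  · rw [← wedge_assoc, hle.1, wedge_right_comm, diff_wedge_self, zero_wedge]
  · rw [wedge_right_comm a c b, ← sdistrib2, wedge_vee_diff]

theorem vee_diff {a b : S} (h : a ⋏ b = zero) (c : S) : (a ⋎ b) ∖ c = a ∖ c ⋎ b ∖ c := by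
  have ha : (a ⋎ b) ⋏ a = a := by rw [sdistrib2, wedge_self, wedge_eq_zero_comm h, vee_zero]
  have hb : (a ⋎ b) ⋏ b = b := by rw [sdistrib2, h, wedge_self, zero_vee]
  calc (a ⋎ b) ∖ c = (a ⋎ b) ∖ c ⋏ (a ⋎ b) := (diff_nle _ _).1.symm
    _ = a ∖ c ⋎ b ∖ c := by rw [sdistrib1, diff_wedge_comm, diff_wedge_comm, ha, hb]

theorem diff_diff_comm (a b c : S) : a ∖ b ∖ c = a ∖ c ∖ b := by
  have hle : nle (a ∖ b ∖ c) (a ∖ c) :=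
    nle_diff (nle_trans (diff_nle _ c) (diff_nle a b)) (diff_wedge_self _ c)
  apply eq_diff_of hle
  · rw [← wedge_assoc, hle.1, ← (diff_nle _ c).1, wedge_assoc, diff_wedge_self, wedge_zero]
  · rw [diff_wedge_comm, ← vee_diff (wedge_wedge_diff a b), wedge_vee_diff]

theorem diff_wedge_diff_of_wedge_eq {a a' : S} (h : a ⋏ a' = a) (b : S) :
    a ∖ b ⋏ (a' ∖ b) = a ∖ b := by
  have ha' : a ∖ b ⋏ a' = a ∖ b := by rw [← (diff_nle a b).1, wedge_assoc, h]
  calc a ∖ b ⋏ (a' ∖ b) = a ∖ b ⋏ (a' ⋏ b) ⋎ a ∖ b ⋏ (a' ∖ b) := by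
        rw [← wedge_assoc, ha', diff_wedge_self, zero_vee]
    _ = a ∖ b := by rw [← sdistrib1, wedge_vee_diff, ha']

end LeftHanded

section VeeList

variable {S : Type u} [SBA S]

def veeList (l : List S) : S := l.foldr (· ⋎ ·) zero

theorem veeList_nil : veeList ([] : List S) = zero := rfl

theorem veeList_cons (a : S) (l : List S) : veeList (a :: l) = a ⋎ veeList l := rfl

theorem veeList_append (l l' : List S) : veeList (l ++ l') = veeList l ⋎ veeList l' := by
  induction l with
  | nil => rw [List.nil_append, veeList_nil, zero_vee]
  | cons a l ih => rw [List.cons_append, veeList_cons, veeList_cons, ih, vee_assoc]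

theorem veeList_eq_zero {l : List S} (h : ∀ a ∈ l, a = zero) : veeList l = zero := by
  induction l with
  | nil => rfl
  | cons a l ih =>
    rw [veeList_cons, h a List.mem_cons_self, zero_vee]
    exact ih fun b hb => h b (List.mem_cons_of_mem a hb)

theorem veeList_eq_of_forall_eq_zero_or_eq {l : List S} {c : S} (h : ∀ a ∈ l, a = zero ∨ a = c)
    (hc : c ∈ l) : veeList l = c := by
  induction l with
  | nil => cases hc
  | cons a l ih =>
    have hl : ∀ b ∈ l, b = zero ∨ b = c := fun b hb => h b (List.mem_cons_of_mem a hb)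
    rw [veeList_cons]
    by_cases hcl : c ∈ l
    · rcases h a List.mem_cons_self with rfl | rfl
      · rw [zero_vee, ih hl hcl]
      · rw [ih hl hcl, vee_eq_left_of_nle (nle_refl a)]
    · have hac : a = c := (List.mem_cons.mp hc).resolve_right hcl |>.symm
      rw [hac, veeList_eq_zero fun b hb => (hl b hb).resolve_right fun hbc => hcl (hbc ▸ hb),
        vee_zero]

theorem IsHom.map_veeList {T : Type u} [SBA T] {f : S → T} (hf : IsHom f) (l : List S) :
    f (veeList l) = veeList (l.map f) := by
  induction l with
  | nil => exact hf.2.2.2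
  | cons a l ih => rw [veeList_cons, hf.2.1, ih, List.map_cons, veeList_cons]

variable {ι : Type*}

theorem wedge_veeList_eq_zero {a : S} {l : List S} (h : ∀ b ∈ l, a ⋏ b = zero) :
    a ⋏ veeList l = zero := by
  induction l with
  | nil => exact wedge_zero a
  | cons b l ih =>
    rw [veeList_cons, sdistrib1, h b List.mem_cons_self, zero_vee]
    exact ih fun c hc => h c (List.mem_cons_of_mem b hc)

def CrossOrth (L : List ι) (φ ψ : ι → S) : Prop := ∀ i ∈ L, ∀ j ∈ L, i ≠ j → φ i ⋏ ψ j = zero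

theorem CrossOrth.of_cons {i : ι} {L : List ι} {φ ψ : ι → S} (h : CrossOrth (i :: L) φ ψ) :
    CrossOrth L φ ψ :=
  fun a ha b hb => h a (List.mem_cons_of_mem i ha) b (List.mem_cons_of_mem i hb)

theorem CrossOrth.of_nle {L : List ι} {φ φ' ψ ψ' : ι → S} (h : CrossOrth L φ ψ)
    (hφ : ∀ i, nle (φ' i) (φ i)) (hψ : ∀ i, nle (ψ' i) (ψ i)) : CrossOrth L φ' ψ' :=
  fun i hi j hj hij => wedge_eq_zero_of_nle (hφ i) (hψ j) (h i hi j hj hij)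

variable [LeftHanded S]

theorem veeList_map_perm {L L' : List ι} (p : L.Perm L') {φ : ι → S} (h : CrossOrth L φ φ) :
    veeList (L.map φ) = veeList (L'.map φ) := by
  refine (p.map φ).foldr_eq' ?_ zero
  simp only [List.mem_map]
  rintro _ ⟨i, hi, rfl⟩ _ ⟨j, hj, rfl⟩ a
  rw [← vee_assoc, ← vee_assoc]
  by_cases hij : i = j
  · rw [hij]
  · rw [vee_comm_of_wedge_eq_zero (h j hj i hi (Ne.symm hij))]

theorem veeList_map_wedge {L : List ι} (hL : L.Nodup) {φ ψ : ι → S} (h : CrossOrth L φ ψ) :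
    veeList (L.map φ) ⋏ veeList (L.map ψ) = veeList (L.map fun i => φ i ⋏ ψ i) := by
  induction L with
  | nil => exact zero_wedge _
  | cons i L ih =>
    obtain ⟨hi, hL⟩ := List.nodup_cons.mp hL
    have hφ : φ i ⋏ veeList (L.map ψ) = zero := wedge_veeList_eq_zero <| by
      simp only [List.mem_map]
      rintro _ ⟨j, hj, rfl⟩
      exact h i List.mem_cons_self j (List.mem_cons_of_mem i hj) fun hij => hi (hij ▸ hj)
    have hψ : ψ i ⋏ veeList (L.map φ) = zero := wedge_veeList_eq_zero <| by
      simp only [List.mem_map]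
      rintro _ ⟨j, hj, rfl⟩
      refine wedge_eq_zero_comm (h j (List.mem_cons_of_mem i hj) i List.mem_cons_self ?_)
      exact fun hij => hi (hij ▸ hj)
    simp only [List.map_cons, veeList_cons]
    rw [sdistrib2, sdistrib1, sdistrib1, hφ, wedge_eq_zero_comm hψ, vee_zero, zero_vee,
      ih hL h.of_cons]

theorem veeList_map_vee {L : List ι} (hL : L.Nodup) {φ ψ : ι → S} (h : CrossOrth L ψ φ) :
    veeList (L.map φ) ⋎ veeList (L.map ψ) = veeList (L.map fun i => φ i ⋎ ψ i) := by
  induction L with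
  | nil => exact vee_zero _
  | cons i L ih =>
    obtain ⟨hi, hL⟩ := List.nodup_cons.mp hL
    have hψ : ψ i ⋏ veeList (L.map φ) = zero := wedge_veeList_eq_zero <| by
      simp only [List.mem_map]
      rintro _ ⟨j, hj, rfl⟩
      exact h i List.mem_cons_self j (List.mem_cons_of_mem i hj) fun hij => hi (hij ▸ hj)
    simp only [List.map_cons, veeList_cons]
    rw [vee_assoc, ← vee_assoc (veeList _), ← vee_comm_of_wedge_eq_zero hψ, vee_assoc,
      ← vee_assoc, ih hL h.of_cons]

theorem veeList_map_diff {L : List ι} (hL : L.Nodup) {φ ψ : ι → S} (hφ : CrossOrth L φ φ)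
    (hφψ : CrossOrth L φ ψ) :
    veeList (L.map φ) ∖ veeList (L.map ψ) = veeList (L.map fun i => φ i ∖ ψ i) := by
  have hdiff : ∀ i, nle (φ i ∖ ψ i) (φ i) := fun i => diff_nle _ _
  have hwedge : ∀ i, nle (φ i ⋏ ψ i) (φ i) := fun i => wedge_nle_left _ _
  refine (eq_diff_of ⟨?_, ?_⟩ ?_ ?_).symm
  · rw [veeList_map_wedge hL (hφ.of_nle hdiff fun i => nle_refl _)]
    exact congrArg veeList (List.map_congr_left fun i _ => (hdiff i).1)
  · rw [veeList_map_wedge hL (hφ.of_nle (fun i => nle_refl _) hdiff)]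
    exact congrArg veeList (List.map_congr_left fun i _ => (hdiff i).2)
  · rw [veeList_map_wedge hL hφψ, veeList_map_wedge hL (hφ.of_nle hdiff hwedge)]
    exact veeList_eq_zero <| by
      simp only [List.mem_map]
      rintro _ ⟨i, -, rfl⟩
      exact diff_wedge_wedge _ _
  · rw [veeList_map_wedge hL hφψ, veeList_map_vee hL (hφ.of_nle hdiff hwedge)]
    exact congrArg veeList (List.map_congr_left fun i _ => wedge_vee_diff _ _)

end VeeList

section Cells

variable {S : Type u} [SBA S] [LeftHanded S] {ι : Type*} (x : ι → S)

theorem wedge_eq_zero_of_wedge_eq {a c d : S} (hc : c ⋏ a = c) (hd : d ⋏ a = zero) :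
    c ⋏ d = zero := by
  rw [← hc, wedge_assoc, wedge_eq_zero_comm hd, wedge_zero]

-- `wedgeGens x s A = s ⋏ x k₁ ⋏ ⋯ ⋏ x kₘ` and `diffGens x s A = s ∖ x k₁ ∖ ⋯ ∖ x kₘ`
-- for `A = {k₁, …, kₘ}`, in any order.
def wedgeGens (s : S) (A : Finset ι) : S :=
  @Multiset.foldl _ _ (fun t k => t ⋏ x k) ⟨fun t _ _ => wedge_right_comm t _ _⟩ s A.val

def diffGens (s : S) (A : Finset ι) : S :=
  @Multiset.foldl _ _ (fun t k => t ∖ x k) ⟨fun t _ _ => diff_diff_comm t _ _⟩ s A.val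

variable [DecidableEq ι]

theorem wedgeGens_insert {k : ι} {A : Finset ι} (hk : k ∉ A) (s : S) :
    wedgeGens x s (insert k A) = wedgeGens x (s ⋏ x k) A := by
  rw [wedgeGens, Finset.insert_val_of_notMem hk, Multiset.foldl_cons]
  rfl

theorem diffGens_insert {k : ι} {A : Finset ι} (hk : k ∉ A) (s : S) :
    diffGens x s (insert k A) = diffGens x (s ∖ x k) A := by
  rw [diffGens, Finset.insert_val_of_notMem hk, Multiset.foldl_cons]
  rfl

theorem wedge_wedgeGens (t s : S) (A : Finset ι) :
    t ⋏ wedgeGens x s A = wedgeGens x (t ⋏ s) A := by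
  induction A using Finset.induction_on generalizing s with
  | empty => rfl
  | insert k A hk ih => rw [wedgeGens_insert x hk, wedgeGens_insert x hk, ih, wedge_assoc]

theorem wedgeGens_diff (s : S) (A : Finset ι) (a : S) :
    wedgeGens x s A ∖ a = wedgeGens x (s ∖ a) A := by
  induction A using Finset.induction_on generalizing s with
  | empty => rfl
  | insert k A hk ih =>
    rw [wedgeGens_insert x hk, wedgeGens_insert x hk, ih, diff_wedge_comm]

theorem wedgeGens_eq_self {s : S} {A : Finset ι} (h : ∀ k ∈ A, s ⋏ x k = s) :
    wedgeGens x s A = s := by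
  induction A using Finset.induction_on with
  | empty => rfl
  | insert k A hk ih =>
    rw [wedgeGens_insert x hk, h k (Finset.mem_insert_self k A)]
    exact ih fun j hj => h j (Finset.mem_insert_of_mem hj)

theorem diffGens_eq_self {s : S} {A : Finset ι} (h : ∀ k ∈ A, s ⋏ x k = zero) :
    diffGens x s A = s := by
  induction A using Finset.induction_on with
  | empty => rfl
  | insert k A hk ih =>
    rw [diffGens_insert x hk, diff_eq_self_of_wedge_eq_zero (h k (Finset.mem_insert_self k A))]
    exact ih fun j hj => h j (Finset.mem_insert_of_mem hj)

theorem wedgeGens_wedge_of_wedge_eq {s : S} {k : ι} (h : s ⋏ x k = s) (A : Finset ι) :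
    wedgeGens x s A ⋏ x k = wedgeGens x s A := by
  induction A using Finset.induction_on generalizing s with
  | empty => exact h
  | insert j A hj ih =>
    rw [wedgeGens_insert x hj]
    exact ih (by rw [wedge_right_comm, h])

theorem wedgeGens_wedge_of_mem {k : ι} {A : Finset ι} (hk : k ∈ A) (s : S) :
    wedgeGens x s A ⋏ x k = wedgeGens x s A := by
  rw [← Finset.insert_erase hk, wedgeGens_insert x (Finset.notMem_erase k A)]
  exact wedgeGens_wedge_of_wedge_eq x (by rw [wedge_assoc, wedge_self]) _

theorem wedgeGens_wedge_wedgeGens {j : ι} {A : Finset ι} (hj : j ∈ A) (s : S) :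
    wedgeGens x s A ⋏ wedgeGens x (x j) A = wedgeGens x s A := by
  rw [wedge_wedgeGens, wedgeGens_wedge_of_mem x hj]
  exact wedgeGens_eq_self x fun k hk => wedgeGens_wedge_of_mem x hk s

theorem diffGens_nle (s : S) (A : Finset ι) : nle (diffGens x s A) s := by
  induction A using Finset.induction_on generalizing s with
  | empty => exact nle_refl s
  | insert k A hk ih => rw [diffGens_insert x hk]; exact nle_trans (ih _) (diff_nle s (x k))

theorem diffGens_wedge_of_mem {k : ι} {A : Finset ι} (hk : k ∈ A) (s : S) :
    diffGens x s A ⋏ x k = zero := by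
  rw [← Finset.insert_erase hk, diffGens_insert x (Finset.notMem_erase k A)]
  exact wedge_eq_zero_of_nle (diffGens_nle x _ _) (nle_refl _) (diff_wedge_self s (x k))

theorem diffGens_wedge_diffGens {s t : S} (h : s ⋏ t = s) (A : Finset ι) :
    diffGens x s A ⋏ diffGens x t A = diffGens x s A := by
  induction A using Finset.induction_on generalizing s t with
  | empty => exact h
  | insert k A hk ih =>
    rw [diffGens_insert x hk, diffGens_insert x hk]
    exact ih (diff_wedge_diff_of_wedge_eq h _)

theorem IsHom.map_wedgeGens {T : Type u} [SBA T] [LeftHanded T] {f : S → T} (hf : IsHom f) (s : S)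
    (A : Finset ι) : f (wedgeGens x s A) = wedgeGens (f ∘ x) (f s) A := by
  induction A using Finset.induction_on generalizing s with
  | empty => rfl
  | insert k A hk ih => rw [wedgeGens_insert x hk, wedgeGens_insert _ hk, ih, hf.1]; rfl

theorem IsHom.map_diffGens {T : Type u} [SBA T] [LeftHanded T] {f : S → T} (hf : IsHom f) (s : S)
    (A : Finset ι) : f (diffGens x s A) = diffGens (f ∘ x) (f s) A := by
  induction A using Finset.induction_on generalizing s with
  | empty => rfl
  | insert k A hk ih => rw [diffGens_insert x hk, diffGens_insert _ hk, ih, hf.2.2.1]; rfl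

/-- The part of `s` below the generators indexed by `A` and outside those indexed by `U \ A`.
For `s = x i`, `i ∈ A`, `U = univ` these are the atoms of the free algebra. -/
def cell (s : S) (U A : Finset ι) : S := diffGens x (wedgeGens x s A) (U \ A)

theorem IsHom.map_cell {T : Type u} [SBA T] [LeftHanded T] {f : S → T} (hf : IsHom f) (s : S)
    (U A : Finset ι) : f (cell x s U A) = cell (f ∘ x) (f s) U A := by
  rw [cell, hf.map_diffGens, hf.map_wedgeGens, cell]

theorem cell_nle (s : S) (U A : Finset ι) : nle (cell x s U A) (wedgeGens x s A) :=
  diffGens_nle x _ _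

theorem cell_wedge_of_mem {k : ι} {A : Finset ι} (hk : k ∈ A) (s : S) (U : Finset ι) :
    cell x s U A ⋏ x k = cell x s U A := by
  rw [← (cell_nle x s U A).1, wedge_assoc, wedgeGens_wedge_of_mem x hk]

theorem cell_wedge_of_mem_sdiff {k : ι} {U A : Finset ι} (hk : k ∈ U \ A) (s : S) :
    cell x s U A ⋏ x k = zero :=
  diffGens_wedge_of_mem x hk _

theorem cell_self_eq_zero {i : ι} {U A : Finset ι} (hi : i ∈ U \ A) : cell x (x i) U A = zero := by
  rw [← cell_wedge_of_mem_sdiff x hi, ← (cell_nle x _ U A).1, wedge_assoc,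
    wedgeGens_wedge_of_wedge_eq x (wedge_self (x i))]

theorem cell_wedge_cell_of_ne {U A B : Finset ι} (hA : A ⊆ U) (hB : B ⊆ U) (hAB : A ≠ B)
    (s t : S) : cell x s U A ⋏ cell x t U B = zero := by
  by_cases hsub : A ⊆ B
  · obtain ⟨k, hkB, hkA⟩ := Finset.exists_of_ssubset (Finset.ssubset_iff_subset_ne.mpr ⟨hsub, hAB⟩)
    exact wedge_eq_zero_comm <| wedge_eq_zero_of_wedge_eq (cell_wedge_of_mem x hkB t U)
      (cell_wedge_of_mem_sdiff x (Finset.mem_sdiff.mpr ⟨hB hkB, hkA⟩) s)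
  · obtain ⟨k, hkA, hkB⟩ := Finset.not_subset.mp hsub
    exact wedge_eq_zero_of_wedge_eq (cell_wedge_of_mem x hkA s U)
      (cell_wedge_of_mem_sdiff x (Finset.mem_sdiff.mpr ⟨hA hkA, hkB⟩) t)

theorem cell_wedge_cell_of_mem {j : ι} {A : Finset ι} (hj : j ∈ A) (s : S) (U : Finset ι) :
    cell x s U A ⋏ cell x (x j) U A = cell x s U A :=
  diffGens_wedge_diffGens x (wedgeGens_wedge_wedgeGens x hj s) _

theorem cell_insert_insert {k : ι} {U A : Finset ι} (hkU : k ∉ U) (hA : A ⊆ U) (s : S) :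
    cell x s (insert k U) (insert k A) = cell x (s ⋏ x k) U A := by
  rw [cell, cell, wedgeGens_insert x fun hkA => hkU (hA hkA), Finset.insert_sdiff_insert,
    Finset.sdiff_insert_of_notMem hkU]

theorem cell_insert {k : ι} {U A : Finset ι} (hkU : k ∉ U) (hA : A ⊆ U) (s : S) :
    cell x s (insert k U) A = cell x (s ∖ x k) U A := by
  have hkA : k ∉ A := fun hkA => hkU (hA hkA)
  rw [cell, cell, Finset.insert_sdiff_of_notMem _ hkA,
    diffGens_insert x fun hk => hkU (Finset.mem_sdiff.mp hk).1, wedgeGens_diff]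

theorem perm_toList_powerset_insert {k : ι} {U : Finset ι} (hk : k ∉ U) :
    (insert k U).powerset.toList.Perm
      (U.powerset.toList.map (insert k) ++ U.powerset.toList) := by
  have hkA : ∀ A ∈ U.powerset.toList, k ∉ A := fun A hA hkA =>
    hk (Finset.mem_powerset.mp (Finset.mem_toList.mp hA) hkA)
  refine (List.perm_ext_iff_of_nodup (Finset.nodup_toList _) ?_).mpr fun A => ?_
  · refine List.nodup_append.mpr ⟨?_, Finset.nodup_toList _, ?_⟩
    · refine (Finset.nodup_toList _).map_on fun A hA B hB hAB => ?_
      rw [← Finset.erase_insert (hkA A hA), hAB, Finset.erase_insert (hkA B hB)]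
    · simp only [List.mem_map]
      rintro _ ⟨B, -, rfl⟩ A hA rfl
      exact hkA _ hA (Finset.mem_insert_self k B)
  · simp only [Finset.mem_toList, Finset.powerset_insert, Finset.mem_union, Finset.mem_image,
      List.mem_append, List.mem_map]
    exact or_comm

theorem veeList_cell (s : S) (U : Finset ι) :
    veeList (U.powerset.toList.map (cell x s U)) = s := by
  induction U using Finset.induction_on generalizing s with
  | empty =>
    rw [Finset.powerset_empty, Finset.toList_singleton, List.map_singleton, veeList_cons,
      veeList_nil, vee_zero]
    rfl
  | insert k U hk ih =>
    have hsub : ∀ A ∈ U.powerset.toList, A ⊆ U := fun A hA =>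
      Finset.mem_powerset.mp (Finset.mem_toList.mp hA)
    have horth : CrossOrth (insert k U).powerset.toList (cell x s (insert k U))
        (cell x s (insert k U)) := fun A hA B hB hAB =>
      cell_wedge_cell_of_ne x (Finset.mem_powerset.mp (Finset.mem_toList.mp hA))
        (Finset.mem_powerset.mp (Finset.mem_toList.mp hB)) hAB s s
    rw [veeList_map_perm (perm_toList_powerset_insert hk) horth, List.map_append,
      veeList_append, List.map_map,
      List.map_congr_left (f := cell x s (insert k U) ∘ insert k) fun A hA =>
        cell_insert_insert x hk (hsub A hA) s,
      List.map_congr_left fun A hA => cell_insert x hk (hsub A hA) s, ih, ih, wedge_vee_diff]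

end Cells

section FreeModel

instance instOption (α : Type v) : SBA (Option α) where
  wedge a b := match b with | none => none | some _ => a
  vee a b := match b with | none => a | some _ => b
  diff a b := match b with | none => a | some _ => none
  zero := none
  wedge_assoc a b c := by cases a <;> cases b <;> cases c <;> rfl
  vee_assoc a b c := by cases a <;> cases b <;> cases c <;> rfl
  absorb1 a b := by cases a <;> cases b <;> rfl
  absorb2 a b := by cases a <;> cases b <;> rfl
  absorb3 a b := by cases a <;> cases b <;> rfl
  absorb4 a b := by cases a <;> cases b <;> rfl
  sdistrib1 a b c := by cases a <;> cases b <;> cases c <;> rfl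
  sdistrib2 a b c := by cases a <;> cases b <;> cases c <;> rfl
  zero_wedge a := by cases a <;> rfl
  wedge_zero a := by cases a <;> rfl
  zero_vee a := by cases a <;> rfl
  vee_zero a := by cases a <;> rfl
  diff_ax1 a b := by cases a <;> cases b <;> rfl
  diff_ax2 a b := by cases a <;> cases b <;> rfl
  diff_ax3 a b := by cases a <;> cases b <;> rfl

instance instOptionLeftHanded (α : Type v) : LeftHanded (Option α) where
  lh_wedge a b := by cases a <;> cases b <;> rfl
  lh_vee a b := by cases a <;> cases b <;> rfl

instance instPi {κ : Type v} (P : κ → Type w) [∀ k, SBA (P k)] : SBA (∀ k, P k) where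
  wedge f g k := f k ⋏ g k
  vee f g k := f k ⋎ g k
  diff f g k := f k ∖ g k
  zero _ := zero
  wedge_assoc _ _ _ := funext fun _ => wedge_assoc ..
  vee_assoc _ _ _ := funext fun _ => vee_assoc ..
  absorb1 _ _ := funext fun _ => absorb1 ..
  absorb2 _ _ := funext fun _ => absorb2 ..
  absorb3 _ _ := funext fun _ => absorb3 ..
  absorb4 _ _ := funext fun _ => absorb4 ..
  sdistrib1 _ _ _ := funext fun _ => sdistrib1 ..
  sdistrib2 _ _ _ := funext fun _ => sdistrib2 ..
  zero_wedge _ := funext fun _ => zero_wedge ..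
  wedge_zero _ := funext fun _ => wedge_zero ..
  zero_vee _ := funext fun _ => zero_vee ..
  vee_zero _ := funext fun _ => vee_zero ..
  diff_ax1 _ _ := funext fun _ => diff_ax1 ..
  diff_ax2 _ _ := funext fun _ => diff_ax2 ..
  diff_ax3 _ _ := funext fun _ => diff_ax3 ..

instance instPiLeftHanded {κ : Type v} (P : κ → Type w) [∀ k, SBA (P k)]
    [∀ k, LeftHanded (P k)] : LeftHanded (∀ k, P k) where
  lh_wedge _ _ := funext fun _ => LeftHanded.lh_wedge ..
  lh_vee _ _ := funext fun _ => LeftHanded.lh_vee ..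

/-- The free left-handed skew Boolean algebra on `ι`. The factor `Option A` is the algebra
`A ∪ {0}` with `a ⋏ b = a` and `a ⋎ b = b` for nonzero `a`, `b`; the lift puts the model in the
universe in which freeness is stated. -/
abbrev FreeModel (ι : Type) : Type u := ∀ A : Finset ι, Option (ULift.{u} A)

theorem isHom_apply {κ : Type} {P : κ → Type u} [∀ k, SBA (P k)] (k : κ) :
    IsHom fun f : (∀ k, P k) => f k :=
  ⟨fun _ _ => rfl, fun _ _ => rfl, fun _ _ => rfl, rfl⟩

variable {ι : Type} [DecidableEq ι]

def gen (i : ι) : FreeModel.{u} ι := fun A => if h : i ∈ A then some ⟨⟨i, h⟩⟩ else none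

variable [Fintype ι]

section Realize

variable {S : Type u} [SBA S] [LeftHanded S] (x : ι → S)

def realizeAt (v : FreeModel.{u} ι) (A : Finset ι) : S :=
  (v A).elim zero fun j => cell x (x j.down) Finset.univ A

noncomputable def realize (v : FreeModel.{u} ι) : S :=
  veeList (Finset.univ.toList.map (realizeAt x v))

theorem realizeAt_wedge_realizeAt_of_ne (v w : FreeModel.{u} ι) {A B : Finset ι} (hAB : A ≠ B) :
    realizeAt x v A ⋏ realizeAt x w B = zero := by
  unfold realizeAt
  rcases v A with _ | i
  · exact zero_wedge _
  rcases w B with _ | j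
  · exact wedge_zero _
  exact cell_wedge_cell_of_ne x (Finset.subset_univ A) (Finset.subset_univ B) hAB _ _

theorem realizeAt_wedge (v w : FreeModel.{u} ι) (A : Finset ι) :
    realizeAt x (v ⋏ w) A = realizeAt x v A ⋏ realizeAt x w A := by
  change Option.elim (v A ⋏ w A) _ _ = Option.elim (v A) _ _ ⋏ Option.elim (w A) _ _
  rcases v A with _ | i <;> rcases w A with _ | j
  · exact (zero_wedge _).symm
  · exact (zero_wedge _).symm
  · exact (wedge_zero _).symm
  · exact (cell_wedge_cell_of_mem x j.down.2 _ _).symm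

theorem realizeAt_vee (v w : FreeModel.{u} ι) (A : Finset ι) :
    realizeAt x (v ⋎ w) A = realizeAt x v A ⋎ realizeAt x w A := by
  change Option.elim (v A ⋎ w A) _ _ = Option.elim (v A) _ _ ⋎ Option.elim (w A) _ _
  rcases v A with _ | i <;> rcases w A with _ | j
  · exact (zero_vee _).symm
  · exact (zero_vee _).symm
  · exact (vee_zero _).symm
  · show cell x (x j.down) _ A = cell x (x i.down) _ A ⋎ cell x (x j.down) _ A
    rw [← cell_wedge_cell_of_mem x j.down.2 (x i.down), absorb4]

theorem realizeAt_diff (v w : FreeModel.{u} ι) (A : Finset ι) :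
    realizeAt x (v ∖ w) A = realizeAt x v A ∖ realizeAt x w A := by
  change Option.elim (v A ∖ w A) _ _ = Option.elim (v A) _ _ ∖ Option.elim (w A) _ _
  rcases v A with _ | i <;> rcases w A with _ | j
  · exact (zero_diff _).symm
  · exact (zero_diff _).symm
  · exact (diff_zero _).symm
  · exact (diff_eq_zero_of_wedge_eq (cell_wedge_cell_of_mem x j.down.2 _ _)).symm

theorem realize_isHom : IsHom (realize x : FreeModel.{u} ι → S) := by
  have hL := Finset.nodup_toList (Finset.univ : Finset (Finset ι))
  have horth : ∀ v w : FreeModel.{u} ι, CrossOrth Finset.univ.toList (realizeAt x v)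
      (realizeAt x w) := fun v w A _ B _ hAB => realizeAt_wedge_realizeAt_of_ne x v w hAB
  refine ⟨fun v w => ?_, fun v w => ?_, fun v w => ?_, ?_⟩
  · rw [realize, realize, realize, veeList_map_wedge hL (horth v w)]
    exact congrArg veeList (List.map_congr_left fun A _ => realizeAt_wedge x v w A)
  · rw [realize, realize, realize, veeList_map_vee hL (horth w v)]
    exact congrArg veeList (List.map_congr_left fun A _ => realizeAt_vee x v w A)
  · rw [realize, realize, realize, veeList_map_diff hL (horth v v) (horth v w)]
    exact congrArg veeList (List.map_congr_left fun A _ => realizeAt_diff x v w A)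
  · exact veeList_eq_zero (by simp only [List.mem_map]; rintro _ ⟨A, -, rfl⟩; rfl)

theorem realize_gen (i : ι) : realize x (gen i : FreeModel.{u} ι) = x i := by
  have hcell : ∀ A, realizeAt x (gen i) A = cell x (x i) Finset.univ A := by
    intro A
    by_cases hi : i ∈ A
    · simp only [realizeAt, gen, dif_pos hi, Option.elim]
    · simp only [realizeAt, gen, dif_neg hi, Option.elim]
      exact (cell_self_eq_zero x (Finset.mem_sdiff.mpr ⟨Finset.mem_univ i, hi⟩)).symm
  rw [realize, funext hcell, ← Finset.powerset_univ, veeList_cell]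

theorem IsHom.map_realize {T : Type u} [SBA T] [LeftHanded T] {f : S → T} (hf : IsHom f)
    (v : FreeModel.{u} ι) : f (realize x v) = realize (f ∘ x) v := by
  rw [realize, hf.map_veeList, List.map_map, realize]
  refine congrArg veeList (List.map_congr_left fun A _ => ?_)
  simp only [Function.comp_apply, realizeAt]
  rcases v A with _ | j
  · exact hf.2.2.2
  · exact hf.map_cell x _ _ _

end Realize

theorem cell_gen_eq_update {j : ι} {A : Finset ι} (hj : j ∈ A) :
    cell gen (gen j) Finset.univ A =
      Function.update (zero : FreeModel.{u} ι) A (some ⟨⟨j, hj⟩⟩) := by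
  funext B
  refine ((isHom_apply B).map_cell gen (gen j) Finset.univ A).trans ?_
  by_cases hBA : B = A
  · subst hBA
    rw [Function.update_self, cell, diffGens_eq_self, wedgeGens_eq_self]
    · exact dif_pos hj
    · intro k hk
      change _ ⋏ dite _ _ _ = _
      rw [dif_pos hk]
      rfl
    · intro k hk
      change _ ⋏ dite _ _ _ = _
      rw [dif_neg (Finset.mem_sdiff.mp hk).2]
      rfl
  rw [Function.update_of_ne hBA]
  set y : ι → Option (ULift.{u} B) := (fun f : FreeModel.{u} ι => f B) ∘ gen
  by_cases hAB : A ⊆ B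
  · obtain ⟨k, hkB, hkA⟩ :=
      Finset.exists_of_ssubset (Finset.ssubset_iff_subset_ne.mpr ⟨hAB, Ne.symm hBA⟩)
    have hk := cell_wedge_of_mem_sdiff y (Finset.mem_sdiff.mpr ⟨Finset.mem_univ k, hkA⟩) (gen j B)
    rwa [show y k = some ⟨⟨k, hkB⟩⟩ from dif_pos hkB] at hk
  · obtain ⟨k, hkA, hkB⟩ := Finset.not_subset.mp hAB
    have hk := cell_wedge_of_mem y hkA (gen j B) Finset.univ
    rw [show y k = none from dif_neg hkB] at hk
    exact hk.symm

theorem realizeAt_gen (v : FreeModel.{u} ι) (A : Finset ι) :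
    realizeAt gen v A = Function.update zero A (v A) := by
  unfold realizeAt
  rcases v A with _ | j
  · exact (Function.update_eq_self A zero).symm
  · exact cell_gen_eq_update j.down.2

theorem realize_gen_eq_self (v : FreeModel.{u} ι) : realize gen v = v := by
  funext B
  refine ((isHom_apply B).map_veeList _).trans ?_
  rw [List.map_map]
  refine veeList_eq_of_forall_eq_zero_or_eq ?_ ?_
  · simp only [List.mem_map]
    rintro _ ⟨A, -, rfl⟩
    rw [Function.comp_apply, realizeAt_gen]
    by_cases hBA : B = A
    · subst hBA
      exact Or.inr (Function.update_self _ _ _)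
    · exact Or.inl (Function.update_of_ne hBA _ _)
  · refine List.mem_map.mpr ⟨B, Finset.mem_toList.mpr (Finset.mem_univ B), ?_⟩
    rw [Function.comp_apply, realizeAt_gen, Function.update_self]

end FreeModel

section Atoms

theorem nle_option_iff {α : Type v} {a b : Option α} : nle a b ↔ a = none ∨ a = b := by
  rcases a with _ | a
  · exact ⟨fun _ => Or.inl rfl, fun _ => zero_nle b⟩
  rcases b with _ | b
  · exact iff_of_false (fun h => Option.some_ne_none a h.1.symm) (by simp)
  · exact ⟨fun h => Or.inr h.2.symm, fun h => ⟨rfl, (h.resolve_left (Option.some_ne_none a)).symm⟩⟩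

theorem nle_pi_iff {κ : Type v} {P : κ → Type w} [∀ k, SBA (P k)] {v w : ∀ k, P k} :
    nle v w ↔ ∀ k, nle (v k) (w k) :=
  ⟨fun h k => ⟨congrFun h.1 k, congrFun h.2 k⟩,
    fun h => ⟨funext fun k => (h k).1, funext fun k => (h k).2⟩⟩

variable {κ : Type v} [DecidableEq κ] {P : κ → Type w}

theorem isAtom_pi_option_iff {v : ∀ k, Option (P k)} :
    IsAtom v ↔ ∃ k b, v = Function.update (zero : ∀ k, Option (P k)) k (some b) := by
  constructor
  · rintro ⟨hv, hmin⟩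
    obtain ⟨k, hk⟩ : ∃ k, v k ≠ none := by
      by_contra! h
      exact hv (funext h)
    obtain ⟨b, hb⟩ := Option.ne_none_iff_exists'.mp hk
    refine ⟨k, b, ((hmin _ (nle_pi_iff.mpr fun j => nle_option_iff.mpr ?_)).resolve_left ?_).symm⟩
    · by_cases hjk : j = k
      · subst hjk
        rw [Function.update_self, hb]
        exact Or.inr rfl
      · exact Or.inl (Function.update_of_ne hjk _ _)
    · intro h
      simpa using congrFun h k
  · rintro ⟨k, b, rfl⟩
    refine ⟨fun h => by simpa using congrFun h k, fun w hw => ?_⟩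
    have hw' := fun j => nle_option_iff.mp (nle_pi_iff.mp hw j)
    have hj : ∀ j ≠ k, w j = none := fun j hjk =>
      (hw' j).elim id fun h => by rw [h, Function.update_of_ne hjk]; rfl
    refine (hw' k).imp (fun h => funext fun j => ?_) (fun h => funext fun j => ?_) <;>
      by_cases hjk : j = k
    · subst hjk; exact h
    · exact hj j hjk
    · subst hjk; exact h
    · rw [hj j hjk, Function.update_of_ne hjk]; rfl

theorem card_isAtom_pi_option :
    Nat.card {v : ∀ k, Option (P k) // IsAtom v} = Nat.card (Σ k, P k) := by
  refine (Nat.card_congr (Equiv.ofBijective (fun σ => ⟨Function.update zero σ.1 (some σ.2),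
    isAtom_pi_option_iff.mpr ⟨_, _, rfl⟩⟩) ⟨?_, ?_⟩)).symm
  · rintro ⟨k, b⟩ ⟨k', b'⟩ h
    have h' := congrArg Subtype.val h
    obtain rfl : k = k' := by
      by_contra hkk
      simpa [Function.update_of_ne hkk] using congrFun h' k
    obtain rfl : b = b' := by simpa using congrFun h' k
    rfl
  · rintro ⟨v, hv⟩
    obtain ⟨k, b, rfl⟩ := isAtom_pi_option_iff.mp hv
    exact ⟨⟨k, b⟩, rfl⟩

theorem sum_card_finset (ι : Type*) [Fintype ι] :
    ∑ A : Finset ι, A.card = Fintype.card ι * 2 ^ (Fintype.card ι - 1) := by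
  rw [← Finset.powerset_univ, Finset.sum_powerset, Finset.card_univ, ← Nat.sum_range_mul_choose]
  refine Finset.sum_congr rfl fun i _ => (Finset.sum_powersetCard i Finset.univ id).trans ?_
  rw [smul_eq_mul, Finset.card_univ, id, mul_comm]

theorem card_isAtom_freeModel (ι : Type) [Fintype ι] [DecidableEq ι] :
    Nat.card {v : FreeModel.{u} ι // IsAtom v} = Fintype.card ι * 2 ^ (Fintype.card ι - 1) := by
  rw [card_isAtom_pi_option, Nat.card_sigma, ← sum_card_finset]
  simp

end Atoms

section Homomorphisms

variable {S T U : Type u} [SBA S] [SBA T] [SBA U]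

theorem isHom_id : IsHom (id : S → S) := ⟨fun _ _ => rfl, fun _ _ => rfl, fun _ _ => rfl, rfl⟩

theorem IsHom.comp {g : T → U} {f : S → T} (hg : IsHom g) (hf : IsHom f) : IsHom (g ∘ f) :=
  ⟨fun a b => by simp only [Function.comp_apply, hf.1, hg.1],
    fun a b => by simp only [Function.comp_apply, hf.2.1, hg.2.1],
    fun a b => by simp only [Function.comp_apply, hf.2.2.1, hg.2.2.1],
    by simp only [Function.comp_apply, hf.2.2.2, hg.2.2.2]⟩

theorem IsHom.isAtom_iff {f : S → T} (hf : IsHom f) (hbij : Function.Bijective f) {a : S} :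
    IsAtom (f a) ↔ IsAtom a := by
  have hzero : ∀ b, f b = zero ↔ b = zero := fun b => by rw [← hf.2.2.2, hbij.1.eq_iff]
  have hnle : ∀ b c, nle (f b) (f c) ↔ nle b c := fun b c => by
    simp only [nle, ← hf.1, hbij.1.eq_iff]
  simp only [IsAtom, ne_eq, hbij.2.forall, hzero, hnle, hbij.1.eq_iff]

theorem Generates.eq_of_isHom {X : Set S} (hX : Generates X) {f g : S → T} (hf : IsHom f)
    (hg : IsHom g) (h : ∀ a ∈ X, f a = g a) : f = g := by
  have hall := hX {a | f a = g a} h (show f zero = g zero by rw [hf.2.2.2, hg.2.2.2])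
    fun a b (ha : f a = g a) (hb : f b = g b) =>
      ⟨show f (a ⋏ b) = g (a ⋏ b) by rw [hf.1, hg.1, ha, hb],
        show f (a ⋎ b) = g (a ⋎ b) by rw [hf.2.1, hg.2.1, ha, hb],
        show f (a ∖ b) = g (a ∖ b) by rw [hf.2.2.1, hg.2.2.1, ha, hb]⟩
  exact funext fun a => (Set.eq_univ_iff_forall.mp hall a : f a = g a)

end Homomorphisms

theorem LFreelyGenerates.exists_isHom_comp_eq {S : Type u} [SBA S] [LeftHanded S] {ι : Type*}
    {x : ι → S} (hfree : LFreelyGenerates S (Set.range x)) (hinj : Function.Injective x)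
    {T : Type u} [SBA T] [LeftHanded T] (y : ι → T) : ∃ f : S → T, IsHom f ∧ f ∘ x = y := by
  obtain ⟨f, hf, hfy⟩ := hfree.2 T (y ∘ (Equiv.ofInjective x hinj).symm)
  exact ⟨f, hf, funext fun i =>
    (hfy ⟨x i, i, rfl⟩).trans (congrArg y (Equiv.ofInjective_symm_apply hinj i))⟩

end SBA

theorem stmt8_general (n : ℕ) (S : Type u) [SBA S] [LeftHanded S]
    (x : Fin n → S) (hinj : Function.Injective x)
    (hfree : LFreelyGenerates S (Set.range x)) :
    {a : S | SBA.IsAtom a}.Finite ∧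
      {a : S | SBA.IsAtom a}.ncard = n * 2 ^ (n - 1) := by
  obtain ⟨f, hf, hfx⟩ := hfree.exists_isHom_comp_eq hinj (gen : Fin n → FreeModel.{u} (Fin n))
  have hsection : Function.RightInverse (realize x) f := fun v => by
    rw [hf.map_realize, hfx, realize_gen_eq_self]
  have hretract : realize x ∘ f = id :=
    hfree.1.eq_of_isHom ((realize_isHom x).comp hf) isHom_id <| by
      rintro _ ⟨i, rfl⟩
      rw [Function.comp_apply, ← Function.comp_apply (f := f), hfx, realize_gen, id]
  have hbij : Function.Bijective f :=
    ⟨Function.LeftInverse.injective (congrFun hretract), hsection.surjective⟩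
  let atoms := (Equiv.ofBijective f hbij).subtypeEquiv fun a => (hf.isAtom_iff hbij).symm
  refine ⟨Set.finite_coe_iff.mp (Finite.of_equiv _ atoms.symm), ?_⟩
  rw [← Nat.card_coe_set_eq, ← Fintype.card_fin n, ← card_isAtom_freeModel.{u}]
  exact Nat.card_congr atoms

theorem stmt8 (n : ℕ) (hn : 1 ≤ n) (S : Type u) [SBA S] [LeftHanded S]
    (x : Fin n → S) (hinj : Function.Injective x)
    (hfree : LFreelyGenerates S (Set.range x)) :
    {a : S | SBA.IsAtom a}.Finite ∧
      {a : S | SBA.IsAtom a}.ncard = n * 2 ^ (n - 1) :=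
  stmt8_general n S x hinj hfree
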